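/- For any u ∈ H^1_0(Ω)^d, the EMAC trilinear form vanishes on the diagonal: c(u,u,u) = 0, where c(u,v,w) = 2(D(u)v, w) + ((∇·u)v, w). -/

import Mathlib

open MeasureTheory Finset

/-- Partial derivative ∂_j u_i at x. -/
noncomputable def pd {d : ℕ} (u : (Fin d → ℝ) → (Fin d → ℝ)) (j i : Fin d)
    (x : Fin d → ℝ) : ℝ := fderiv ℝ u x (Pi.single j 1) i

/-- Symmetric gradient D(u)_{ij} = (∂_j u_i + ∂_i u_j)/2. -/
noncomputable def symGrad {d : ℕ} (u : (Fin d → ℝ) → (Fin d → ℝ)) (i j : Fin d)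
    (x : Fin d → ℝ) : ℝ := (pd u j i x + pd u i j x) / 2

/-- Divergence ∇·u at x. -/
noncomputable def divg {d : ℕ} (u : (Fin d → ℝ) → (Fin d → ℝ)) (x : Fin d → ℝ) : ℝ :=
  ∑ i, pd u i i x

/-- EMAC trilinear form c(u,v,w) = 2(D(u)v, w) + ((∇·u)v, w) over Ω. -/
noncomputable def cform {d : ℕ} (Ω : Set (Fin d → ℝ))
    (u v w : (Fin d → ℝ) → (Fin d → ℝ)) : ℝ :=
  ∫ x in Ω, (2 * ∑ i, (∑ j, symGrad u i j x * v x j) * w x i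
      + divg u x * ∑ i, v x i * w x i)

/-! Pointwise, the integrand of `c(u,u,u)` is the divergence of the energy flux `|u|² u`:
both equal `|u|² ∇·u + 2 Σ_{j,k} u_j u_k ∂_j u_k`, since `2 (D(u)u)·u = 2 u·(∇u)u` by symmetry
of the quadratic form. The integral of the divergence of a compactly supported `C¹` field is
zero (integrate by parts against the constant `1`), and `u` vanishes off `Ω`. -/

theorem integral_fderiv_apply_eq_zero {E G : Type*} [NormedAddCommGroup E] [NormedSpace ℝ E]
    [FiniteDimensional ℝ E] [MeasurableSpace E] [BorelSpace E] {μ : Measure E}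
    [μ.IsAddHaarMeasure] [NormedAddCommGroup G] [NormedSpace ℝ G]
    {g : E → G} (hg : ContDiff ℝ 1 g) (hgs : HasCompactSupport g) (v : E) :
    ∫ x, fderiv ℝ g x v ∂μ = 0 := by
  have hg'_int : Integrable (fun x => fderiv ℝ g x v) μ :=
    ((hg.continuous_fderiv one_ne_zero).clm_apply continuous_const).integrable_of_hasCompactSupport
      (hgs.fderiv_apply ℝ v)
  have hg_int : Integrable g μ := hg.continuous.integrable_of_hasCompactSupport hgs
  simpa using integral_smul_fderiv_eq_neg_fderiv_smul_of_integrable (μ := μ) (v := v)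
    (f := fun _ => (1 : ℝ)) (by simp) (by simpa using hg'_int) (by simpa using hg_int)
    (fun _ _ => differentiableAt_const _) (fun x _ => (hg.differentiable one_ne_zero) x)

theorem integral_divg_eq_zero {d : ℕ} {F : (Fin d → ℝ) → (Fin d → ℝ)}
    (hF : ContDiff ℝ 1 F) (hFs : HasCompactSupport F) :
    ∫ x, divg F x = 0 := by
  have hint : ∀ i, Integrable (fun x => fderiv ℝ F x (Pi.single i 1)) :=
    fun i => ((hF.continuous_fderiv one_ne_zero).clm_apply continuous_const
      ).integrable_of_hasCompactSupport (hFs.fderiv_apply ℝ _)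
  have hcomp : ∀ i, ∫ x, fderiv ℝ F x (Pi.single i 1) i = 0 := fun i => by
    rw [← eval_integral (hint i).eval, integral_fderiv_apply_eq_zero hF hFs, Pi.zero_apply]
  simp only [divg, pd]
  rw [integral_finsetSum _ fun i _ => (hint i).eval i]
  exact Finset.sum_eq_zero fun i _ => hcomp i

section Pointwise

variable {d : ℕ} {u : (Fin d → ℝ) → (Fin d → ℝ)} {x : Fin d → ℝ}

theorem pd_smul {s : (Fin d → ℝ) → ℝ} (hs : DifferentiableAt ℝ s x)
    (hu : DifferentiableAt ℝ u x) (j i : Fin d) :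
    pd (fun y => s y • u y) j i x = s x * pd u j i x + fderiv ℝ s x (Pi.single j 1) * u x i := by
  simp [pd, fderiv_fun_smul hs hu]

theorem hasFDerivAt_sum_mul_self (hu : DifferentiableAt ℝ u x) :
    HasFDerivAt (fun y => ∑ k, u y k * u y k)
      (∑ k, (u x k • (ContinuousLinearMap.proj k).comp (fderiv ℝ u x)
        + u x k • (ContinuousLinearMap.proj k).comp (fderiv ℝ u x))) x := by
  have hcomp : ∀ k, HasFDerivAt (fun y => u y k)
      ((ContinuousLinearMap.proj k).comp (fderiv ℝ u x)) x := fun k => by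
    exact (ContinuousLinearMap.proj k).hasFDerivAt.comp x hu.hasFDerivAt
  exact HasFDerivAt.fun_sum fun k _ => (hcomp k).mul (hcomp k)

theorem fderiv_sum_mul_self_apply (hu : DifferentiableAt ℝ u x) (v : Fin d → ℝ) :
    fderiv ℝ (fun y => ∑ k, u y k * u y k) x v = 2 * ∑ k, u x k * fderiv ℝ u x v k := by
  rw [(hasFDerivAt_sum_mul_self hu).fderiv, Finset.mul_sum]
  simp only [FunLike.coe_sum, Finset.sum_apply, add_apply,
    smul_apply, ContinuousLinearMap.coe_comp, Function.comp_apply,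
    ContinuousLinearMap.proj_apply, smul_eq_mul]
  exact Finset.sum_congr rfl fun k _ => by ring

theorem divg_sum_mul_self_smul (hu : DifferentiableAt ℝ u x) :
    divg (fun y => (∑ k, u y k * u y k) • u y) x
      = (∑ k, u x k * u x k) * divg u x + 2 * ∑ j, ∑ k, u x j * u x k * pd u j k x := by
  have hs : DifferentiableAt ℝ (fun y => ∑ k, u y k * u y k) x :=
    (hasFDerivAt_sum_mul_self hu).differentiableAt
  have hs' : ∀ j, fderiv ℝ (fun y => ∑ k, u y k * u y k) x (Pi.single j 1)
      = 2 * ∑ k, u x k * pd u j k x := fun j => fderiv_sum_mul_self_apply hu _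
  simp only [divg, pd_smul hs hu, hs', Finset.sum_add_distrib, ← Finset.mul_sum]
  congr 1
  simp only [Finset.mul_sum, Finset.sum_mul]
  exact Finset.sum_congr rfl fun j _ => Finset.sum_congr rfl fun k _ => by ring

theorem emac_integrand_diag_eq :
    2 * ∑ i, (∑ j, symGrad u i j x * u x j) * u x i + divg u x * ∑ i, u x i * u x i
      = (∑ k, u x k * u x k) * divg u x + 2 * ∑ j, ∑ k, u x j * u x k * pd u j k x := by
  have hswap : ∑ i, ∑ j, pd u j i x * u x j * u x i = ∑ j, ∑ k, u x j * u x k * pd u j k x := by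
    rw [Finset.sum_comm]
    exact Finset.sum_congr rfl fun j _ => Finset.sum_congr rfl fun k _ => by ring
  have hrename : ∑ i, ∑ j, pd u i j x * u x j * u x i = ∑ j, ∑ k, u x j * u x k * pd u j k x :=
    Finset.sum_congr rfl fun j _ => Finset.sum_congr rfl fun k _ => by ring
  have hsplit : 2 * ∑ i, (∑ j, symGrad u i j x * u x j) * u x i
      = ∑ i, ∑ j, pd u j i x * u x j * u x i + ∑ i, ∑ j, pd u i j x * u x j * u x i := by
    simp only [symGrad, Finset.sum_mul, Finset.mul_sum, ← Finset.sum_add_distrib]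
    exact Finset.sum_congr rfl fun i _ => Finset.sum_congr rfl fun j _ => by ring
  rw [hsplit, hswap, hrename]
  ring

end Pointwise

theorem cform_diag_zero_general {d : ℕ} (Ω : Set (Fin d → ℝ))
    (u : (Fin d → ℝ) → (Fin d → ℝ))
    (hu : ContDiff ℝ 1 u) (hus : HasCompactSupport u) (husupp : tsupport u ⊆ Ω) :
    cform Ω u u u = 0 := by
  have hF : ContDiff ℝ 1 fun y => (∑ k, u y k * u y k) • u y :=
    (ContDiff.sum fun k _ => (contDiff_pi.1 hu k).mul (contDiff_pi.1 hu k)).smul hu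
  have hFs : HasCompactSupport fun y => (∑ k, u y k * u y k) • u y :=
    hus.smul_left (f := fun y => ∑ k, u y k * u y k)
  have hdivg : ∀ x, 2 * ∑ i, (∑ j, symGrad u i j x * u x j) * u x i
      + divg u x * ∑ i, u x i * u x i = divg (fun y => (∑ k, u y k * u y k) • u y) x :=
    fun x => by
    rw [emac_integrand_diag_eq, divg_sum_mul_self_smul (hu.differentiable one_ne_zero x)]
  unfold cform
  rw [setIntegral_eq_integral_of_forall_compl_eq_zero fun x hx => ?_]
  · rw [funext hdivg]
    exact integral_divg_eq_zero hF hFs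
  · simp [image_eq_zero_of_notMem_tsupport fun h => hx (husupp h)]

theorem cform_diag_zero {d : ℕ} (hd : d = 2 ∨ d = 3) (Ω : Set (Fin d → ℝ))
    (hΩ : IsOpen Ω) (hΩb : Bornology.IsBounded Ω)
    (u : (Fin d → ℝ) → (Fin d → ℝ))
    (hu : ContDiff ℝ 1 u) (hus : HasCompactSupport u) (husupp : tsupport u ⊆ Ω) :
    cform Ω u u u = 0 :=
  cform_diag_zero_general Ω u hu hus husupp
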